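/- Let V be an irreducible weight module for τ with finite-dimensional weight spaces, and let z be a homogeneous central element of degree m acting nonzero on V. Then there exists a central (τ-equivariant) operator T on V with zT = Tz = Id; i.e., z acts as an invertible operator on V. -/

import Mathlib

/-!
Every `K r i` is central in `τ`, hence so is `z`, and the action of `z` is an endomorphism of the
`τ`-module `V`. By Schur's lemma a nonzero endomorphism of an irreducible module is bijective, and
its inverse is again `τ`-equivariant.
-/

noncomputable section

/-- Abstract presentation of the toroidal Lie algebra
`τ = G ⊗ ℂ[t₁^{±1},…,t_n^{±1}] ⊕ Z ⊕ D`: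
a Lie algebra `τ` equipped with generators `X(r)g = g ⊗ t^r`, `K m i = t^m Kᵢ`
and degree derivations `dᵢ`, subject to the toroidal bracket relations. -/
structure ToroidalAlg (n : ℕ) (G : Type*) [LieRing G] [LieAlgebra ℂ G]
    (B : G →ₗ[ℂ] G →ₗ[ℂ] ℂ) (τ : Type*) [LieRing τ] [LieAlgebra ℂ τ] where
  X : (Fin n → ℤ) → G →ₗ[ℂ] τ
  K : (Fin n → ℤ) → Fin n → τ
  d : Fin n → τ
  K_rel : ∀ m : Fin n → ℤ, ∑ i : Fin n, (m i : ℂ) • K m i = 0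
  bracket_XX : ∀ (r s : Fin n → ℤ) (g h : G),
    ⁅X r g, X s h⁆ = X (r + s) ⁅g, h⁆ + B g h • ∑ i : Fin n, (r i : ℂ) • K (r + s) i
  K_central : ∀ (m : Fin n → ℤ) (i : Fin n) (y : τ), ⁅K m i, y⁆ = 0
  bracket_dX : ∀ (i : Fin n) (r : Fin n → ℤ) (g : G), ⁅d i, X r g⁆ = (r i : ℂ) • X r g
  bracket_dK : ∀ (i : Fin n) (m : Fin n → ℤ) (j : Fin n), ⁅d i, K m j⁆ = (m i : ℂ) • K m j
  bracket_dd : ∀ i j : Fin n, ⁅d i, d j⁆ = 0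
  spanning : Submodule.span ℂ
      ((⋃ r : Fin n → ℤ, Set.range (X r)) ∪
        (⋃ m : Fin n → ℤ, Set.range (K m)) ∪ Set.range d) = ⊤



variable {n : ℕ} {G : Type*} [LieRing G] [LieAlgebra ℂ G]
  {B : G →ₗ[ℂ] G →ₗ[ℂ] ℂ}
  {τ : Type*} [LieRing τ] [LieAlgebra ℂ τ]

/-- The Cartan subalgebra `h̃ = h ⊕ ⟨K₁,…,K_n⟩ ⊕ ⟨d₁,…,d_n⟩` of `τ`, as a set. -/
def ToroidalAlg.cartanSet (T : ToroidalAlg n G B τ) (hG : LieSubalgebra ℂ G) : Set τ :=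
  ((fun g => T.X 0 g) '' (hG : Set G)) ∪ (Set.range fun i => T.K 0 i) ∪ Set.range T.d

/-- The weight space of a `τ`-module `V` for a weight `χ : τ → ℂ` with respect to
the Cartan subalgebra `h̃`. -/
def ToroidalAlg.wtSp (T : ToroidalAlg n G B τ) (hG : LieSubalgebra ℂ G)
    (V : Type*) [AddCommGroup V] [Module ℂ V] [LieRingModule τ V] [LieModule ℂ τ V]
    (χ : τ → ℂ) : Submodule ℂ V :=
  ⨅ x ∈ T.cartanSet hG, Module.End.eigenspace (LieModule.toEnd ℂ τ V x) (χ x)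

namespace LieModuleHom

variable {R L M N : Type*} [CommRing R] [LieRing L]
  [AddCommGroup M] [Module R M] [LieRingModule L M]
  [AddCommGroup N] [Module R N] [LieRingModule L N]

/-- Schur's lemma. -/
theorem bijective_of_ne_zero [LieModule.IsIrreducible R L M] [LieModule.IsIrreducible R L N]
    (f : M →ₗ⁅R,L⁆ N) (hf : f ≠ 0) : Function.Bijective f := by
  have hker : f.ker ≠ ⊤ := fun h ↦ hf <| ext fun m ↦ f.mem_ker.mp (h ▸ trivial)
  have hrange : f.range ≠ ⊥ := fun h ↦ hf <| ext fun m ↦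
    (LieSubmodule.mem_bot _).mp (h ▸ (f.mem_range _).mpr ⟨m, rfl⟩)
  exact ⟨f.ker_eq_bot.mp ((eq_bot_or_eq_top f.ker).resolve_right hker),
    f.range_eq_top.mp ((eq_bot_or_eq_top f.range).resolve_left hrange)⟩

end LieModuleHom

namespace LieModule

variable {R L M : Type*} [CommRing R] [LieRing L] [LieAlgebra R L]
  [AddCommGroup M] [Module R M] [LieRingModule L M] [LieModule R L M]

def toEndOfMemCenter {z : L} (hz : z ∈ LieAlgebra.center R L) : M →ₗ⁅R,L⁆ M :=
  { toEnd R L M z with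
    map_lie' := fun {x m} ↦
      LinearMap.congr_fun (commute_toEnd_of_mem_center_left M hz x).eq m }

@[simp]
theorem toEndOfMemCenter_apply {z : L} (hz : z ∈ LieAlgebra.center R L) (m : M) :
    toEndOfMemCenter hz m = ⁅z, m⁆ :=
  rfl

theorem exists_inverse_of_mem_center [IsIrreducible R L M] {z : L}
    (hz : z ∈ LieAlgebra.center R L) (hnz : ∃ m : M, ⁅z, m⁆ ≠ 0) :
    ∃ g : M →ₗ⁅R,L⁆ M, ∀ m : M, g ⁅z, m⁆ = m ∧ ⁅z, g m⁆ = m := by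
  have hne : toEndOfMemCenter (M := M) hz ≠ 0 := by
    obtain ⟨m, hm⟩ := hnz
    exact fun h ↦ hm (by simpa using LieModuleHom.congr_fun h m)
  let e := Equiv.ofBijective _ ((toEndOfMemCenter hz).bijective_of_ne_zero hne)
  exact ⟨(toEndOfMemCenter hz).inverse e.symm e.left_inv e.right_inv,
    fun m ↦ ⟨e.symm_apply_apply m, e.apply_symm_apply m⟩⟩

end LieModule

namespace ToroidalAlg

theorem span_K_le_center (T : ToroidalAlg n G B τ) :
    Submodule.span ℂ (⋃ r : Fin n → ℤ, Set.range (T.K r)) ≤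
      (LieAlgebra.center ℂ τ).toSubmodule := by
  refine Submodule.span_le.mpr ?_
  rintro _ ⟨_, ⟨r, rfl⟩, i, rfl⟩
  exact (LieModule.mem_maxTrivSubmodule ℂ τ τ _).mpr fun y ↦ by
    rw [← lie_skew, T.K_central, neg_zero]

end ToroidalAlg

theorem central_homogeneous_invertible_general
    (T : ToroidalAlg n G B τ)
    {V : Type*} [AddCommGroup V] [Module ℂ V] [LieRingModule τ V] [LieModule ℂ τ V]
    [LieModule.IsIrreducible ℂ τ V]
    (z : τ)
    (hzZ : z ∈ Submodule.span ℂ (⋃ r : Fin n → ℤ, Set.range (T.K r)))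
    (hnz : ∃ v : V, ⁅z, v⁆ ≠ 0) :
    ∃ Top : Module.End ℂ V,
      (∀ (r : Fin n → ℤ) (g : G) (v : V), Top ⁅T.X r g, v⁆ = ⁅T.X r g, Top v⁆) ∧
      (∀ (r : Fin n → ℤ) (i : Fin n) (v : V), Top ⁅T.K r i, v⁆ = ⁅T.K r i, Top v⁆) ∧
      (∀ v : V, Top ⁅z, v⁆ = v ∧ ⁅z, Top v⁆ = v) := by
  obtain ⟨g, hg⟩ := LieModule.exists_inverse_of_mem_center (T.span_K_le_center hzZ) hnz
  exact ⟨g, fun _ _ _ ↦ g.map_lie _ _, fun _ _ _ ↦ g.map_lie _ _, hg⟩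

/-- **Lemma 1.7(2).** Let `V` be an irreducible weight module for `τ`
with finite-dimensional weight spaces, and let `z ∈ Z` be homogeneous of degree `m`
and act nonzero on `V`.  Then there is a central (equivariant) operator `T` on `V`
with `zT = Tz = Id`; i.e. `z` acts invertibly on `V`. -/
theorem central_homogeneous_invertible
    [FiniteDimensional ℂ G] [LieAlgebra.IsSimple ℂ G]
    (T : ToroidalAlg n G B τ)
    (hG : LieSubalgebra ℂ G) [hG.IsCartanSubalgebra]
    {V : Type*} [AddCommGroup V] [Module ℂ V] [LieRingModule τ V] [LieModule ℂ τ V]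
    [LieModule.IsIrreducible ℂ τ V]
    (hwt : (⨆ χ : τ → ℂ, T.wtSp hG V χ) = ⊤)
    (hfd : ∀ χ : τ → ℂ, FiniteDimensional ℂ (T.wtSp hG V χ))
    (z : τ) (m : Fin n → ℤ)
    (hzZ : z ∈ Submodule.span ℂ (⋃ r : Fin n → ℤ, Set.range (T.K r)))
    (hdeg : ∀ i : Fin n, ⁅T.d i, z⁆ = (m i : ℂ) • z)
    (hnz : ∃ v : V, ⁅z, v⁆ ≠ 0) :
    ∃ Top : Module.End ℂ V,
      (∀ (r : Fin n → ℤ) (g : G) (v : V), Top ⁅T.X r g, v⁆ = ⁅T.X r g, Top v⁆) ∧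
      (∀ (r : Fin n → ℤ) (i : Fin n) (v : V), Top ⁅T.K r i, v⁆ = ⁅T.K r i, Top v⁆) ∧
      (∀ v : V, Top ⁅z, v⁆ = v ∧ ⁅z, Top v⁆ = v) :=
  central_homogeneous_invertible_general T z hzZ hnz

end
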